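/- The holomorphic continuation δ̃_a of a hyperbolic motion δ_a (a ∈ 𝔹ⁿ) is well-defined on the Lie ball: for z ∈ ℬⁿ, the denominator Q(a)Q(z) − 2a·z + 1 = Q(a)·Q(z − a*) is nonzero, where a* = a/‖a‖² (for a ≠ 0), because a* lies outside the closed unit ball and the isotropic cone of a point outside the closed unit ball does not meet ℬⁿ. -/

import Mathlib

open scoped RealInnerProductSpace

noncomputable section

def Q {n : ℕ} (z : EuclideanSpace ℂ (Fin n)) : ℂ := ∑ i, (z i) ^ 2

def embed {n : ℕ} (x : EuclideanSpace ℝ (Fin n)) : EuclideanSpace ℂ (Fin n) :=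
  WithLp.toLp 2 (fun i => (x i : ℂ))

def LieBall (n : ℕ) : Set (EuclideanSpace ℂ (Fin n)) :=
  {z | ‖z‖ ^ 2 + Real.sqrt (‖z‖ ^ 4 - ‖Q z‖ ^ 2) < 1}

/-- The complex bilinear dot product on ℂⁿ. -/
def dotC {n : ℕ} (z w : EuclideanSpace ℂ (Fin n)) : ℂ := ∑ i, z i * w i

/-- Holomorphic continuation of the hyperbolic motion `δ_a`. -/
def deltaC {n : ℕ} (a : EuclideanSpace ℝ (Fin n)) (z : EuclideanSpace ℂ (Fin n)) :
    EuclideanSpace ℂ (Fin n) :=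
  (Q (embed a) * Q z - 2 * dotC (embed a) z + 1)⁻¹ •
    (((‖a‖ ^ 2 : ℝ) - 1 : ℂ) • z + (1 + Q z) • embed a - (2 * dotC z (embed a)) • embed a)

lemma norm_sq_real {n : ℕ} (a : EuclideanSpace ℝ (Fin n)) : ‖a‖ ^ 2 = ∑ i, a i ^ 2 := by
  rw [EuclideanSpace.norm_eq, Real.sq_sqrt (by positivity)]
  exact Finset.sum_congr rfl fun i _ => by rw [Real.norm_eq_abs, sq_abs]

lemma sum_lin_sq {n : ℕ} (b x y : Fin n → ℝ) (c1 c2 c3 : ℝ) :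
    ∑ i, (c1 * b i + c2 * x i + c3 * y i) ^ 2 =
      c1 ^ 2 * ∑ i, b i ^ 2 + c2 ^ 2 * ∑ i, x i ^ 2 + c3 ^ 2 * ∑ i, y i ^ 2
      + 2 * c1 * c2 * ∑ i, b i * x i + 2 * c1 * c3 * ∑ i, b i * y i
      + 2 * c2 * c3 * ∑ i, x i * y i := by
  simp only [Finset.mul_sum, ← Finset.sum_add_distrib]
  exact Finset.sum_congr rfl fun i _ => by ring

lemma key {n : ℕ} (b : EuclideanSpace ℝ (Fin n)) (hb : 1 ≤ ‖b‖)
    (z : EuclideanSpace ℂ (Fin n)) (hz : z ∈ LieBall n) : Q (z - embed b) ≠ 0 := by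
  intro hQ0
  set X := ∑ i, (z i).re ^ 2 with hX
  set Y := ∑ i, (z i).im ^ 2 with hY
  set P := ∑ i, (z i).re * (z i).im with hP
  set B := ∑ i, b i ^ 2 with hB
  set β := ∑ i, b i * (z i).re with hβ
  set γ := ∑ i, b i * (z i).im with hγ
  have hBnorm : ‖b‖ ^ 2 = B := by rw [norm_sq_real]
  have hB1 : (1 : ℝ) ≤ B := by nlinarith [hb, norm_nonneg b]
  have hsub : ∀ i, (z - embed b) i = z i - (b i : ℂ) := fun i => by
    simp [embed]
  -- real and imaginary parts of Q (z - embed b)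
  have hQre : (Q (z - embed b)).re = X - 2 * β + B - Y := by
    rw [Q, Complex.re_sum]
    have e : ∀ i ∈ Finset.univ, (((z - embed b) i) ^ 2).re =
        ((-1) * b i + 1 * (z i).re + 0 * (z i).im) ^ 2 - (z i).im ^ 2 := by
      intro i _
      rw [hsub i, sq, Complex.mul_re]
      simp
      ring
    rw [Finset.sum_congr rfl e, Finset.sum_sub_distrib, sum_lin_sq]
    rw [hX, hβ, hB, hY]
    ring
  have hQim : (Q (z - embed b)).im = 2 * (P - γ) := by
    rw [Q, Complex.im_sum]
    have e : ∀ i ∈ Finset.univ, (((z - embed b) i) ^ 2).im =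
        2 * ((z i).re * (z i).im) - 2 * (b i * (z i).im) := by
      intro i _
      rw [hsub i, sq, Complex.mul_im]
      simp
      ring
    rw [Finset.sum_congr rfl e, Finset.sum_sub_distrib, ← Finset.mul_sum, ← Finset.mul_sum]
    rw [hP, hγ]
    ring
  have h1 : X - 2 * β + B - Y = 0 := by rw [← hQre, hQ0]; simp
  have h2 : P - γ = 0 := by
    have : (Q (z - embed b)).im = 0 := by rw [hQ0]; simp
    rw [hQim] at this; linarith
  -- Lie ball condition in coordinates
  have hnorm : ‖z‖ ^ 2 = X + Y := by
    rw [EuclideanSpace.norm_eq, Real.sq_sqrt (by positivity), hX, hY,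
      ← Finset.sum_add_distrib]
    exact Finset.sum_congr rfl fun i _ => by
      rw [Complex.sq_norm, Complex.normSq_apply]; ring
  have hQzre : (Q z).re = X - Y := by
    rw [Q, Complex.re_sum, hX, hY, ← Finset.sum_sub_distrib]
    exact Finset.sum_congr rfl fun i _ => by rw [sq, Complex.mul_re]; ring
  have hQzim : (Q z).im = 2 * P := by
    rw [Q, Complex.im_sum, hP, Finset.mul_sum]
    exact Finset.sum_congr rfl fun i _ => by rw [sq, Complex.mul_im]; ring
  have habs : ‖Q z‖ ^ 2 = (X - Y) ^ 2 + (2 * P) ^ 2 := by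
    rw [Complex.sq_norm, Complex.normSq_apply, hQzre, hQzim]; ring
  have hzlt : X + Y + Real.sqrt ((X + Y) ^ 2 - ((X - Y) ^ 2 + (2 * P) ^ 2)) < 1 := by
    have h4 : ‖z‖ ^ 4 = (X + Y) ^ 2 := by
      rw [show ‖z‖ ^ 4 = (‖z‖ ^ 2) ^ 2 by ring, hnorm]
    have := hz
    rw [LieBall, Set.mem_setOf_eq, hnorm, h4, habs] at this
    exact this
  -- derive contradiction : 1 ≤ X + Y + sqrt(...)
  have hsqrt_nonneg : 0 ≤ Real.sqrt ((X + Y) ^ 2 - ((X - Y) ^ 2 + (2 * P) ^ 2)) :=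
    Real.sqrt_nonneg _
  rcases eq_or_lt_of_le (Finset.sum_nonneg (fun i _ => sq_nonneg ((z i).im)) : (0:ℝ) ≤ Y)
    with hY0 | hYpos
  · -- Y = 0 : then y = 0 and x = b, so X = B ≥ 1
    have hy0 : ∀ i, (z i).im = 0 := by
      intro i
      have h := (Finset.sum_eq_zero_iff_of_nonneg
        (fun i _ => sq_nonneg ((z i).im))).mp hY0.symm i (Finset.mem_univ i)
      exact pow_eq_zero_iff (two_ne_zero) |>.mp h
    have hu0 : ∀ i, (z i).re = b i := by
      intro i
      have hsum0 : ∑ i, ((z i).re - b i) ^ 2 = 0 := by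
        have expand : ∑ i, ((z i).re - b i) ^ 2
            = ∑ i, ((-1) * b i + 1 * (z i).re + 0 * (z i).im) ^ 2 :=
          Finset.sum_congr rfl fun i _ => by ring
        rw [expand, sum_lin_sq, ← hX, ← hβ, ← hB]
        linarith
      have h := (Finset.sum_eq_zero_iff_of_nonneg
        (fun i _ => sq_nonneg _)).mp hsum0 i (Finset.mem_univ i)
      have := pow_eq_zero_iff (two_ne_zero) |>.mp h
      linarith
    have hXB : X = B := by
      rw [hX, hB]
      exact Finset.sum_congr rfl fun i _ => by rw [hu0 i]
    linarith
  · -- Y > 0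
    -- SOS inequality
    have hs : 0 ≤ ∑ i, ((Y + (β - B)) * b i + (-(β - B)) * (z i).re
        + (-γ) * (z i).im) ^ 2 := Finset.sum_nonneg fun i _ => sq_nonneg _
    rw [sum_lin_sq, ← hX, ← hY, ← hP, ← hB, ← hβ, ← hγ] at hs
    have hXval : X = Y + 2 * β - B := by linarith
    have hPval : P = γ := by linarith
    have e : (Y + (β - B)) ^ 2 * B + (-(β - B)) ^ 2 * X + (-γ) ^ 2 * Y
        + 2 * (Y + (β - B)) * (-(β - B)) * β + 2 * (Y + (β - B)) * (-γ) * γ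
        + 2 * (-(β - B)) * (-γ) * P
        = Y * (B * Y - (β - B) ^ 2 - γ ^ 2) + (β - B) ^ 2 * (X - 2 * β + B - Y)
          + 2 * (β - B) * γ * (P - γ) := by ring
    rw [e, h1, h2] at hs
    have hw : 0 ≤ Y * (B * Y - (β - B) ^ 2 - γ ^ 2) := by linarith [hs]
    have hE : 0 ≤ B * Y - (β - B) ^ 2 - γ ^ 2 := by
      have hm : Y * 0 ≤ Y * (B * Y - (β - B) ^ 2 - γ ^ 2) := by linarith [hw]
      exact le_of_mul_le_mul_left hm hYpos
    have hkey : (2 * (Y + (β - B))) ^ 2 ≤ (X + Y) ^ 2 - ((X - Y) ^ 2 + (2 * P) ^ 2) := by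
      rw [hXval, hPval]
      have e2 : ((Y + 2 * β - B) + Y) ^ 2 - (((Y + 2 * β - B) - Y) ^ 2 + (2 * γ) ^ 2)
          - (2 * (Y + (β - B))) ^ 2 = 4 * (B * Y - (β - B) ^ 2 - γ ^ 2) := by ring
      linarith [hE, e2]
    have hsq : |2 * (Y + (β - B))| ≤
        Real.sqrt ((X + Y) ^ 2 - ((X - Y) ^ 2 + (2 * P) ^ 2)) := by
      rw [← Real.sqrt_sq_eq_abs]
      exact Real.sqrt_le_sqrt hkey
    have habs2 : -(2 * (Y + (β - B))) ≤ |2 * (Y + (β - B))| := neg_le_abs _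
    -- X + Y + sqrt ≥ X + Y - 2(Y + β - B) = X - Y - 2β + 2B = B ≥ 1
    linarith [hXval]

theorem stmt18 (n : ℕ) (a : EuclideanSpace ℝ (Fin n)) (ha0 : 0 < ‖a‖) (ha : ‖a‖ < 1)
    (z : EuclideanSpace ℂ (Fin n)) (hz : z ∈ LieBall n) :
    Q (embed a) * Q z - 2 * dotC (embed a) z + 1 =
      Q (embed a) * Q (z - embed ((‖a‖ ^ 2)⁻¹ • a)) ∧
    Q (embed a) * Q z - 2 * dotC (embed a) z + 1 ≠ 0 := by
  have hS : (0:ℝ) < ‖a‖ ^ 2 := by positivity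
  have hSsum : ‖a‖ ^ 2 = ∑ i, a i ^ 2 := norm_sq_real a
  have hSC : ((‖a‖ ^ 2 : ℝ) : ℂ) ≠ 0 := by exact_mod_cast hS.ne'
  have hQa : Q (embed a) = ((‖a‖ ^ 2 : ℝ) : ℂ) := by
    rw [Q, hSsum]
    push_cast
    exact Finset.sum_congr rfl fun i _ => by simp [embed]
  set c : ℝ := (‖a‖ ^ 2)⁻¹ with hc
  have hQsub : Q (z - embed (c • a)) =
      Q z - 2 * (c : ℂ) * dotC (embed a) z + (c : ℂ) ^ 2 * ((‖a‖ ^ 2 : ℝ) : ℂ) := by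
    rw [Q, Q, dotC, hSsum]
    push_cast
    simp only [Finset.mul_sum, ← Finset.sum_sub_distrib, ← Finset.sum_add_distrib]
    refine Finset.sum_congr rfl fun i _ => ?_
    have hzi : (z - embed (c • a)) i = z i - (c : ℂ) * (a i : ℂ) := by
      simp [embed]
      try push_cast
      try ring
    rw [hzi]
    simp only [embed, WithLp.ofLp_toLp]
    try ring
  have h1c : (c : ℂ) = (((‖a‖ ^ 2 : ℝ) : ℂ))⁻¹ := by
    rw [hc]
    push_cast
    rfl
  have hpart1 : Q (embed a) * Q z - 2 * dotC (embed a) z + 1 =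
      Q (embed a) * Q (z - embed ((‖a‖ ^ 2)⁻¹ • a)) := by
    have hmul : ((‖a‖ ^ 2 : ℝ) : ℂ) * (c : ℂ) = 1 := by
      rw [h1c]
      exact mul_inv_cancel₀ hSC
    rw [hQa, hQsub]
    linear_combination (2 * dotC (embed a) z - ((‖a‖ ^ 2 : ℝ) : ℂ) * (c : ℂ) - 1) * hmul
  refine ⟨hpart1, ?_⟩
  rw [hpart1]
  have hnb : 1 ≤ ‖c • a‖ := by
    have h1 : ‖c • a‖ = c * ‖a‖ := by
      rw [norm_smul, Real.norm_eq_abs, abs_of_pos (by positivity)]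
    have h2 : c * ‖a‖ = ‖a‖⁻¹ := by
      rw [hc, sq]
      field_simp
    have h3 : ‖a‖ * ‖a‖⁻¹ = 1 := mul_inv_cancel₀ ha0.ne'
    nlinarith [h1, h2, h3]
  rw [hQa]
  exact mul_ne_zero hSC (key (c • a) hnb z hz)

end
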